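/- Let ℓ be the piecewise linear function on [dih_min, dih_max] defined by ℓ(x) = 1 pt on [dih_min, d1], ℓ(x) = −0.19145x + 0.2910494 on [d1, d2], ℓ(x) = −0.0965385x + 0.1562106 on [d2, d3], and ℓ(x) = −0.19145x + 0.31004 on [d3, dih_max], where dih_min ≈ 0.8639, d1 = dih(S(2,2,2,2,2,2)) = arccos(1/3), d2 = 1.42068, d3 = dih(S(2,2,2,2.51,2,2)), dih_max = arccos(−29003/96999). Then for any t1, t2, t3, t4 ∈ [dih_min, dih_max] with t1+t2+t3+t4 ≥ 2π, one has ℓ(t1)+ℓ(t2)+ℓ(t3)+ℓ(t4) < 0.33 pt. -/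
import Mathlib


noncomputable section
open Real

def ufun (a b c : ℝ) : ℝ := -a^2 - b^2 - c^2 + 2*a*b + 2*a*c + 2*b*c

/-- ∂Δ/∂x4 for the Cayley–Menger-type polynomial Δ. -/
def deltaX4 (x1 x2 x3 x4 x5 x6 : ℝ) : ℝ :=
  x1*(-x1+x2+x3-x4+x5+x6) - x1*x4 + x2*x5 + x3*x6 - x2*x3 - x5*x6

/-- One point: pt = 11π/3 − 12 arccos(1/√3). -/
def pt : ℝ := 11*π/3 - 12*Real.arccos (1/Real.sqrt 3)

/-- dih_min = dih(S(2,2.51,2,2,2.51,2)) ≈ 0.8639. -/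
def dihMin : ℝ :=
  Real.arccos (deltaX4 4 (2.51^2) 4 4 (2.51^2) 4 /
    Real.sqrt (ufun 4 (2.51^2) 4 * ufun 4 4 (2.51^2)))

/-- dih_max = arccos(−29003/96999). -/
def dihMax : ℝ := Real.arccos (-(29003/96999))

/-- d1 = dih(S(2,2,2,2,2,2)) = arccos(1/3). -/
def d1 : ℝ := Real.arccos (1/3)

def d2 : ℝ := 1.42068

/-- d3 = dih(S(2,2,2,2.51,2,2)). -/
def d3 : ℝ :=
  Real.arccos (deltaX4 4 4 4 (2.51^2) 4 4 / Real.sqrt (ufun 4 4 4 * ufun 4 4 4))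

/-- The piecewise linear upper bound ℓ on the compression as a function of the
dihedral angle (Calculations 9.1, 9.5.1–9.5.3). -/
def ell (x : ℝ) : ℝ :=
  if x ≤ d1 then pt
  else if x ≤ d2 then -0.19145*x + 0.2910494
  else if x ≤ d3 then -0.0965385*x + 0.1562106
  else -0.19145*x + 0.31004


private lemma nonneg_of_hasDerivAt {f f' : ℝ → ℝ}
    (hder : ∀ y, HasDerivAt f (f' y) y) (h0 : f 0 = 0)
    (hp : ∀ y, 0 ≤ y → 0 ≤ f' y) {x : ℝ} (hx : 0 ≤ x) : 0 ≤ f x := by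
  have hmono : MonotoneOn f (Set.Ici (0:ℝ)) := by
    refine monotoneOn_of_deriv_nonneg (convex_Ici 0)
      (fun y _ => (hder y).continuousAt.continuousWithinAt)
      (fun y _ => (hder y).differentiableAt.differentiableWithinAt) ?_
    intro y hy
    rw [(hder y).deriv]
    rw [interior_Ici] at hy
    exact hp y (le_of_lt hy)
  have h := hmono Set.self_mem_Ici (Set.mem_Ici.mpr hx) hx
  rwa [h0] at h
lemma cosLo2 (x : ℝ) (hx : 0 ≤ x) : 1 - x^2/2 ≤ Real.cos x := by
  have h := nonneg_of_hasDerivAt (f := fun y : ℝ => Real.cos y - (1 - y^2/2))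
      (f' := fun y : ℝ => (y) - Real.sin y)
      (fun y => ((Real.hasDerivAt_cos y).sub ((hasDerivAt_const y (1:ℝ)).sub ((hasDerivAt_pow 2 y).div_const 2))).congr_deriv (by push_cast; ring))
      (by norm_num) (fun y hy => by have hprev := Real.sin_le hy; linarith) hx
  linarith

lemma sinLo3 (x : ℝ) (hx : 0 ≤ x) : x - x^3/6 ≤ Real.sin x := by
  have h := nonneg_of_hasDerivAt (f := fun y : ℝ => Real.sin y - (y - y^3/6))
      (f' := fun y : ℝ => Real.cos y - (1 - y^2/2))
      (fun y => ((Real.hasDerivAt_sin y).sub ((hasDerivAt_id' y).sub ((hasDerivAt_pow 3 y).div_const 6))).congr_deriv (by push_cast; ring))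
      (by norm_num) (fun y hy => by have hprev := cosLo2 y hy; linarith) hx
  linarith

lemma cosUp4 (x : ℝ) (hx : 0 ≤ x) : Real.cos x ≤ 1 - x^2/2 + x^4/24 := by
  have h := nonneg_of_hasDerivAt (f := fun y : ℝ => (1 - y^2/2 + y^4/24) - Real.cos y)
      (f' := fun y : ℝ => Real.sin y - (y - y^3/6))
      (fun y => ((((hasDerivAt_const y (1:ℝ)).sub ((hasDerivAt_pow 2 y).div_const 2)).add ((hasDerivAt_pow 4 y).div_const 24)).sub (Real.hasDerivAt_cos y)).congr_deriv (by push_cast; ring))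
      (by norm_num) (fun y hy => by have hprev := sinLo3 y hy; linarith) hx
  linarith

lemma sinUp5 (x : ℝ) (hx : 0 ≤ x) : Real.sin x ≤ x - x^3/6 + x^5/120 := by
  have h := nonneg_of_hasDerivAt (f := fun y : ℝ => (y - y^3/6 + y^5/120) - Real.sin y)
      (f' := fun y : ℝ => (1 - y^2/2 + y^4/24) - Real.cos y)
      (fun y => ((((hasDerivAt_id' y).sub ((hasDerivAt_pow 3 y).div_const 6)).add ((hasDerivAt_pow 5 y).div_const 120)).sub (Real.hasDerivAt_sin y)).congr_deriv (by push_cast; ring))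
      (by norm_num) (fun y hy => by have hprev := cosUp4 y hy; linarith) hx
  linarith

lemma cosLo6 (x : ℝ) (hx : 0 ≤ x) : 1 - x^2/2 + x^4/24 - x^6/720 ≤ Real.cos x := by
  have h := nonneg_of_hasDerivAt (f := fun y : ℝ => Real.cos y - (1 - y^2/2 + y^4/24 - y^6/720))
      (f' := fun y : ℝ => (y - y^3/6 + y^5/120) - Real.sin y)
      (fun y => ((Real.hasDerivAt_cos y).sub ((((hasDerivAt_const y (1:ℝ)).sub ((hasDerivAt_pow 2 y).div_const 2)).add ((hasDerivAt_pow 4 y).div_const 24)).sub ((hasDerivAt_pow 6 y).div_const 720))).congr_deriv (by push_cast; ring))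
      (by norm_num) (fun y hy => by have hprev := sinUp5 y hy; linarith) hx
  linarith

lemma sinLo7 (x : ℝ) (hx : 0 ≤ x) : x - x^3/6 + x^5/120 - x^7/5040 ≤ Real.sin x := by
  have h := nonneg_of_hasDerivAt (f := fun y : ℝ => Real.sin y - (y - y^3/6 + y^5/120 - y^7/5040))
      (f' := fun y : ℝ => Real.cos y - (1 - y^2/2 + y^4/24 - y^6/720))
      (fun y => ((Real.hasDerivAt_sin y).sub ((((hasDerivAt_id' y).sub ((hasDerivAt_pow 3 y).div_const 6)).add ((hasDerivAt_pow 5 y).div_const 120)).sub ((hasDerivAt_pow 7 y).div_const 5040))).congr_deriv (by push_cast; ring))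
      (by norm_num) (fun y hy => by have hprev := cosLo6 y hy; linarith) hx
  linarith

lemma cosUp8 (x : ℝ) (hx : 0 ≤ x) : Real.cos x ≤ 1 - x^2/2 + x^4/24 - x^6/720 + x^8/40320 := by
  have h := nonneg_of_hasDerivAt (f := fun y : ℝ => (1 - y^2/2 + y^4/24 - y^6/720 + y^8/40320) - Real.cos y)
      (f' := fun y : ℝ => Real.sin y - (y - y^3/6 + y^5/120 - y^7/5040))
      (fun y => ((((((hasDerivAt_const y (1:ℝ)).sub ((hasDerivAt_pow 2 y).div_const 2)).add ((hasDerivAt_pow 4 y).div_const 24)).sub ((hasDerivAt_pow 6 y).div_const 720)).add ((hasDerivAt_pow 8 y).div_const 40320)).sub (Real.hasDerivAt_cos y)).congr_deriv (by push_cast; ring))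
      (by norm_num) (fun y hy => by have hprev := sinLo7 y hy; linarith) hx
  linarith

lemma sinUp9 (x : ℝ) (hx : 0 ≤ x) : Real.sin x ≤ x - x^3/6 + x^5/120 - x^7/5040 + x^9/362880 := by
  have h := nonneg_of_hasDerivAt (f := fun y : ℝ => (y - y^3/6 + y^5/120 - y^7/5040 + y^9/362880) - Real.sin y)
      (f' := fun y : ℝ => (1 - y^2/2 + y^4/24 - y^6/720 + y^8/40320) - Real.cos y)
      (fun y => ((((((hasDerivAt_id' y).sub ((hasDerivAt_pow 3 y).div_const 6)).add ((hasDerivAt_pow 5 y).div_const 120)).sub ((hasDerivAt_pow 7 y).div_const 5040)).add ((hasDerivAt_pow 9 y).div_const 362880)).sub (Real.hasDerivAt_sin y)).congr_deriv (by push_cast; ring))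
      (by norm_num) (fun y hy => by have hprev := cosUp8 y hy; linarith) hx
  linarith

lemma cosLo10 (x : ℝ) (hx : 0 ≤ x) : 1 - x^2/2 + x^4/24 - x^6/720 + x^8/40320 - x^10/3628800 ≤ Real.cos x := by
  have h := nonneg_of_hasDerivAt (f := fun y : ℝ => Real.cos y - (1 - y^2/2 + y^4/24 - y^6/720 + y^8/40320 - y^10/3628800))
      (f' := fun y : ℝ => (y - y^3/6 + y^5/120 - y^7/5040 + y^9/362880) - Real.sin y)
      (fun y => ((Real.hasDerivAt_cos y).sub ((((((hasDerivAt_const y (1:ℝ)).sub ((hasDerivAt_pow 2 y).div_const 2)).add ((hasDerivAt_pow 4 y).div_const 24)).sub ((hasDerivAt_pow 6 y).div_const 720)).add ((hasDerivAt_pow 8 y).div_const 40320)).sub ((hasDerivAt_pow 10 y).div_const 3628800))).congr_deriv (by push_cast; ring))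
      (by norm_num) (fun y hy => by have hprev := sinUp9 y hy; linarith) hx
  linarith

lemma sinLo11 (x : ℝ) (hx : 0 ≤ x) : x - x^3/6 + x^5/120 - x^7/5040 + x^9/362880 - x^11/39916800 ≤ Real.sin x := by
  have h := nonneg_of_hasDerivAt (f := fun y : ℝ => Real.sin y - (y - y^3/6 + y^5/120 - y^7/5040 + y^9/362880 - y^11/39916800))
      (f' := fun y : ℝ => Real.cos y - (1 - y^2/2 + y^4/24 - y^6/720 + y^8/40320 - y^10/3628800))
      (fun y => ((Real.hasDerivAt_sin y).sub ((((((hasDerivAt_id' y).sub ((hasDerivAt_pow 3 y).div_const 6)).add ((hasDerivAt_pow 5 y).div_const 120)).sub ((hasDerivAt_pow 7 y).div_const 5040)).add ((hasDerivAt_pow 9 y).div_const 362880)).sub ((hasDerivAt_pow 11 y).div_const 39916800))).congr_deriv (by push_cast; ring))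
      (by norm_num) (fun y hy => by have hprev := cosLo10 y hy; linarith) hx
  linarith

lemma cosUp12 (x : ℝ) (hx : 0 ≤ x) : Real.cos x ≤ 1 - x^2/2 + x^4/24 - x^6/720 + x^8/40320 - x^10/3628800 + x^12/479001600 := by
  have h := nonneg_of_hasDerivAt (f := fun y : ℝ => (1 - y^2/2 + y^4/24 - y^6/720 + y^8/40320 - y^10/3628800 + y^12/479001600) - Real.cos y)
      (f' := fun y : ℝ => Real.sin y - (y - y^3/6 + y^5/120 - y^7/5040 + y^9/362880 - y^11/39916800))
      (fun y => ((((((((hasDerivAt_const y (1:ℝ)).sub ((hasDerivAt_pow 2 y).div_const 2)).add ((hasDerivAt_pow 4 y).div_const 24)).sub ((hasDerivAt_pow 6 y).div_const 720)).add ((hasDerivAt_pow 8 y).div_const 40320)).sub ((hasDerivAt_pow 10 y).div_const 3628800)).add ((hasDerivAt_pow 12 y).div_const 479001600)).sub (Real.hasDerivAt_cos y)).congr_deriv (by push_cast; ring))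
      (by norm_num) (fun y hy => by have hprev := sinLo11 y hy; linarith) hx
  linarith

lemma sinUp13 (x : ℝ) (hx : 0 ≤ x) : Real.sin x ≤ x - x^3/6 + x^5/120 - x^7/5040 + x^9/362880 - x^11/39916800 + x^13/6227020800 := by
  have h := nonneg_of_hasDerivAt (f := fun y : ℝ => (y - y^3/6 + y^5/120 - y^7/5040 + y^9/362880 - y^11/39916800 + y^13/6227020800) - Real.sin y)
      (f' := fun y : ℝ => (1 - y^2/2 + y^4/24 - y^6/720 + y^8/40320 - y^10/3628800 + y^12/479001600) - Real.cos y)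
      (fun y => ((((((((hasDerivAt_id' y).sub ((hasDerivAt_pow 3 y).div_const 6)).add ((hasDerivAt_pow 5 y).div_const 120)).sub ((hasDerivAt_pow 7 y).div_const 5040)).add ((hasDerivAt_pow 9 y).div_const 362880)).sub ((hasDerivAt_pow 11 y).div_const 39916800)).add ((hasDerivAt_pow 13 y).div_const 6227020800)).sub (Real.hasDerivAt_sin y)).congr_deriv (by push_cast; ring))
      (by norm_num) (fun y hy => by have hprev := cosUp12 y hy; linarith) hx
  linarith

lemma cosLo14 (x : ℝ) (hx : 0 ≤ x) : 1 - x^2/2 + x^4/24 - x^6/720 + x^8/40320 - x^10/3628800 + x^12/479001600 - x^14/87178291200 ≤ Real.cos x := by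
  have h := nonneg_of_hasDerivAt (f := fun y : ℝ => Real.cos y - (1 - y^2/2 + y^4/24 - y^6/720 + y^8/40320 - y^10/3628800 + y^12/479001600 - y^14/87178291200))
      (f' := fun y : ℝ => (y - y^3/6 + y^5/120 - y^7/5040 + y^9/362880 - y^11/39916800 + y^13/6227020800) - Real.sin y)
      (fun y => ((Real.hasDerivAt_cos y).sub ((((((((hasDerivAt_const y (1:ℝ)).sub ((hasDerivAt_pow 2 y).div_const 2)).add ((hasDerivAt_pow 4 y).div_const 24)).sub ((hasDerivAt_pow 6 y).div_const 720)).add ((hasDerivAt_pow 8 y).div_const 40320)).sub ((hasDerivAt_pow 10 y).div_const 3628800)).add ((hasDerivAt_pow 12 y).div_const 479001600)).sub ((hasDerivAt_pow 14 y).div_const 87178291200))).congr_deriv (by push_cast; ring))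
      (by norm_num) (fun y hy => by have hprev := sinUp13 y hy; linarith) hx
  linarith

lemma pi_lb : (3.1415926535:ℝ) < π := lt_trans (by norm_num) Real.pi_gt_d20
lemma pi_ub : π < (3.1415926536:ℝ) := lt_trans Real.pi_lt_d20 (by norm_num)

lemma cos_ub_d1 : Real.cos 1.2309595 < 1/3 :=
  lt_of_le_of_lt (cosUp12 1.2309595 (by norm_num)) (by norm_num)

lemma cos_lb_d1 : (1:ℝ)/3 < Real.cos 1.2309594 :=
  lt_of_lt_of_le (by norm_num) (cosLo14 1.2309594 (by norm_num))

lemma d1_ub : d1 ≤ 1.2309595 := by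
  have h1 : Real.arccos (1/3) ≤ Real.arccos (Real.cos 1.2309595) := by
    rw [Real.arccos_eq_pi_div_two_sub_arcsin, Real.arccos_eq_pi_div_two_sub_arcsin]
    have := Real.monotone_arcsin (le_of_lt cos_ub_d1)
    linarith
  rwa [Real.arccos_cos (by norm_num) (by linarith [Real.pi_gt_three])] at h1

lemma d1_lb : (1.2309594:ℝ) ≤ d1 := by
  have h1 : Real.arccos (Real.cos 1.2309594) ≤ Real.arccos (1/3) := by
    rw [Real.arccos_eq_pi_div_two_sub_arcsin, Real.arccos_eq_pi_div_two_sub_arcsin]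
    have := Real.monotone_arcsin (le_of_lt cos_lb_d1)
    linarith
  rwa [Real.arccos_cos (by norm_num) (by linarith [Real.pi_gt_three])] at h1

lemma sqrt3_pos : (0:ℝ) < Real.sqrt 3 := Real.sqrt_pos.mpr (by norm_num)

lemma sqrt3_ge_one : (1:ℝ) ≤ Real.sqrt 3 := by
  nlinarith [Real.sq_sqrt (show (0:ℝ) ≤ 3 by norm_num), Real.sqrt_nonneg 3]

lemma pt_eq : pt = 6*d1 - 7*π/3 := by
  have harg1 : (-1:ℝ) ≤ 1/Real.sqrt 3 := le_trans (show (-1:ℝ) ≤ 0 by norm_num) (by positivity)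
  have harg2 : (1:ℝ)/Real.sqrt 3 ≤ 1 := by
    rw [div_le_one sqrt3_pos]; exact sqrt3_ge_one
  have hcosu : Real.cos (Real.arccos (1/Real.sqrt 3)) = 1/Real.sqrt 3 :=
    Real.cos_arccos harg1 harg2
  have hcos2u : Real.cos (2*Real.arccos (1/Real.sqrt 3)) = -(1/3) := by
    rw [Real.cos_two_mul, hcosu, div_pow, one_pow,
      Real.sq_sqrt (show (0:ℝ) ≤ 3 by norm_num)]
    norm_num
  have h0 : 0 ≤ 2*Real.arccos (1/Real.sqrt 3) := by
    have := Real.arccos_nonneg (1/Real.sqrt 3); linarith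
  have hpi : 2*Real.arccos (1/Real.sqrt 3) ≤ π := by
    have := Real.arccos_le_pi_div_two.mpr (show (0:ℝ) ≤ 1/Real.sqrt 3 by positivity)
    linarith
  have key := Real.arccos_cos h0 hpi
  rw [hcos2u, Real.arccos_neg] at key
  unfold pt d1
  linarith

lemma d3_eq : d3 = π/2 + Real.arcsin (3001/60000) := by
  have hu : ufun 4 4 4 * ufun 4 4 4 = 48*48 := by norm_num [ufun]
  have hs : Real.sqrt ((48:ℝ)*48) = 48 := Real.sqrt_mul_self (by norm_num)
  unfold d3
  rw [hu, hs, show deltaX4 4 4 4 (2.51^2) 4 4 / 48 = -(3001/60000) by norm_num [deltaX4],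
    Real.arccos_neg, Real.arccos_eq_pi_div_two_sub_arcsin]
  ring

lemma arcsin_d3_lb : (0.0500374:ℝ) ≤ Real.arcsin (3001/60000) := by
  have hs : Real.sin 0.0500374 ≤ 3001/60000 :=
    le_trans (sinUp5 0.0500374 (by norm_num)) (by norm_num)
  have h := Real.monotone_arcsin hs
  rwa [Real.arcsin_sin (by linarith [Real.pi_gt_three]) (by linarith [Real.pi_gt_three])] at h

lemma arcsin_d3_ub : Real.arcsin (3001/60000) ≤ 0.0500376 := by
  have hs : (3001/60000:ℝ) ≤ Real.sin 0.0500376 :=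
    le_trans (by norm_num) (sinLo3 0.0500376 (by norm_num))
  have h := Real.monotone_arcsin hs
  rwa [Real.arcsin_sin (by linarith [Real.pi_gt_three]) (by linarith [Real.pi_gt_three])] at h

lemma d3_lb : (1.6208337:ℝ) ≤ d3 := by
  rw [d3_eq]; linarith [arcsin_d3_lb, pi_lb]

lemma d3_ub : d3 ≤ 1.6208340 := by
  rw [d3_eq]; linarith [arcsin_d3_ub, pi_ub]

lemma dihMax_ub : dihMax ≤ 1.8745 := by
  have heq : dihMax = π/2 + Real.arcsin (29003/96999) := by
    unfold dihMax
    rw [Real.arccos_neg, Real.arccos_eq_pi_div_two_sub_arcsin]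
    ring
  have hs : (29003/96999:ℝ) ≤ Real.sin 0.3037 :=
    le_trans (by norm_num) (sinLo3 0.3037 (by norm_num))
  have h := Real.monotone_arcsin hs
  rw [Real.arcsin_sin (by linarith [Real.pi_gt_three]) (by linarith [Real.pi_gt_three])] at h
  rw [heq]; linarith [pi_ub]

lemma pt_lb : (0.0553735416:ℝ) ≤ pt := by
  rw [pt_eq]; linarith [d1_lb, pi_ub]

lemma pt_ub : pt ≤ 0.0553741419 := by
  rw [pt_eq]; linarith [d1_ub, pi_lb]

lemma ell_cases (t : ℝ) :
    (t ≤ 1.2309595 ∧ t ≤ 1.2309595 ∧ ell t ≤ 0.0553741419) ∨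
    (1.2309594 ≤ t ∧ t ≤ 1.42068 ∧ ell t ≤ -0.19145*t + 0.2910494) ∨
    (1.42068 ≤ t ∧ t ≤ 1.620834 ∧ ell t ≤ -0.0965385*t + 0.1562106) ∨
    (1.6208337 ≤ t ∧ 1.6208337 ≤ t ∧ ell t ≤ -0.19145*t + 0.31004) := by
  have hd1l := d1_lb; have hd1u := d1_ub
  have hd3l := d3_lb; have hd3u := d3_ub
  have hd2 : d2 = 1.42068 := rfl
  unfold ell
  rcases le_or_gt t d1 with h|h
  · exact Or.inl ⟨by linarith, by linarith, by rw [if_pos h]; exact pt_ub⟩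
  rcases le_or_gt t d2 with h2|h2
  · exact Or.inr (Or.inl ⟨by linarith, by linarith,
      by rw [if_neg (not_le.mpr h), if_pos h2]⟩)
  rcases le_or_gt t d3 with h3|h3
  · exact Or.inr (Or.inr (Or.inl ⟨by linarith, by linarith,
      by rw [if_neg (not_le.mpr h), if_neg (not_le.mpr h2), if_pos h3]⟩))
  · exact Or.inr (Or.inr (Or.inr ⟨by linarith, by linarith,
      by rw [if_neg (not_le.mpr h), if_neg (not_le.mpr h2), if_neg (not_le.mpr h3)]⟩))

set_option maxHeartbeats 4000000 in
/-- If t1, t2, t3, t4 ∈ [dih_min, dih_max] and t1+t2+t3+t4 ≥ 2π, then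
ℓ(t1)+ℓ(t2)+ℓ(t3)+ℓ(t4) < 0.33 pt. -/
theorem ell_four_sum_lt
    (t1 t2 t3 t4 : ℝ)
    (h1 : t1 ∈ Set.Icc dihMin dihMax) (h2 : t2 ∈ Set.Icc dihMin dihMax)
    (h3 : t3 ∈ Set.Icc dihMin dihMax) (h4 : t4 ∈ Set.Icc dihMin dihMax)
    (hsum : 2*π ≤ t1 + t2 + t3 + t4) :
    ell t1 + ell t2 + ell t3 + ell t4 < 0.33 * pt := by
  have hM1 : t1 ≤ 1.8745 := le_trans h1.2 dihMax_ub
  have hM2 : t2 ≤ 1.8745 := le_trans h2.2 dihMax_ub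
  have hM3 : t3 ≤ 1.8745 := le_trans h3.2 dihMax_ub
  have hM4 : t4 ≤ 1.8745 := le_trans h4.2 dihMax_ub
  clear h1 h2 h3 h4
  have hsum' : (6.283185307:ℝ) ≤ t1 + t2 + t3 + t4 := by linarith [pi_lb]
  have hrhs : (0.0182732687:ℝ) < 0.33 * pt := by linarith [pt_lb]
  clear hsum
  rcases ell_cases t1 with ⟨ha1,ha1',hb1⟩|⟨ha1,ha1',hb1⟩|⟨ha1,ha1',hb1⟩|⟨ha1,ha1',hb1⟩ <;>
  rcases ell_cases t2 with ⟨ha2,ha2',hb2⟩|⟨ha2,ha2',hb2⟩|⟨ha2,ha2',hb2⟩|⟨ha2,ha2',hb2⟩ <;>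
  rcases ell_cases t3 with ⟨ha3,ha3',hb3⟩|⟨ha3,ha3',hb3⟩|⟨ha3,ha3',hb3⟩|⟨ha3,ha3',hb3⟩ <;>
  rcases ell_cases t4 with ⟨ha4,ha4',hb4⟩|⟨ha4,ha4',hb4⟩|⟨ha4,ha4',hb4⟩|⟨ha4,ha4',hb4⟩ <;>
  linarith only [hsum', hrhs, hM1, hM2, hM3, hM4,
    ha1, ha1', hb1, ha2, ha2', hb2, ha3, ha3', hb3, ha4, ha4', hb4]
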